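/- arXiv:1902.07803 — 2 statements merged into one kernel-verified Lean document; each statement's English description precedes it below -/
import Mathlib

section
/- Assume 2g − 2 + n > 0. If g > 0, the poset SP_{g,n} of stable spin graphs of genus g with n legs has exactly two connected components, SP⁺_{g,n} and SP⁻_{g,n}, consisting respectively of the even and odd spin graphs. If g = 0, then SP_{g,n} is connected and SP_{g,n} = SP⁺_{g,n}. -/
/-!
Common combinatorial preliminaries: weighted graphs with legs, contractions,
spin structures, following Caporaso–Melo–Pacini, "Tropicalizing the moduli
space of spin curves".
-/

attribute [local instance] Classical.propDecidable

noncomputable section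

/-- A weighted graph with legs.  Edges are recorded as elements of a finite
type `E` together with their (unordered) pair of endpoints `ends e : Sym2 V`
(a loop corresponds to a diagonal pair); legs are elements of a finite type
`Lg` with an endpoint map `legEnd`; `w` is the weight function. -/
structure WGraph : Type 1 where
  V : Type
  E : Type
  Lg : Type
  fV : Fintype V
  fE : Fintype E
  fL : Fintype Lg
  dV : DecidableEq V
  dE : DecidableEq E
  dL : DecidableEq Lg
  neV : Nonempty V
  ends : E → Sym2 V
  legEnd : Lg → V
  w : V → ℕ

attribute [instance] WGraph.fV WGraph.fE WGraph.fL WGraph.dV WGraph.dE WGraph.dL WGraph.neV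

namespace WGraph

variable (G : WGraph)

/-- The multiplicity of the vertex `v` in the edge `e` (`2` for a loop at `v`). -/
def degMul (v : G.V) (e : G.E) : ℕ :=
  Sym2.lift ⟨fun a b => (if a = v then 1 else 0) + (if b = v then 1 else 0),
    fun _ _ => add_comm _ _⟩ (G.ends e)

/-- The degree of a vertex: number of non-leg half-edges ending at it. -/
def deg (v : G.V) : ℕ := ∑ e, G.degMul v e

/-- The number of legs ending at a vertex. -/
def legsAt (v : G.V) : ℕ := (Finset.univ.filter fun l => G.legEnd l = v).card

/-- The number of loops based at a vertex. -/
def loops (v : G.V) : ℕ := (Finset.univ.filter fun e => G.ends e = Sym2.diag v).card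

/-- The boundary map `∂ : E_G → V_G` over `F₂`, sending an edge to the sum of
its two endpoints. -/
def boundary : (G.E → ZMod 2) →ₗ[ZMod 2] (G.V → ZMod 2) where
  toFun x := fun v => ∑ e, x e * (G.degMul v e : ZMod 2)
  map_add' x y := by
    funext v
    simp [add_mul, Finset.sum_add_distrib]
  map_smul' c x := by
    funext v
    simp [Finset.mul_sum, mul_assoc]

/-- The `F₂`-indicator vector of a set of edges. -/
def indicator (P : Finset G.E) : G.E → ZMod 2 := fun e => if e ∈ P then 1 else 0

/-- A subset of edges is cyclic if it lies in the cycle space `C_G = ker ∂`,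
i.e. its indicator vector is killed by the boundary map. -/
def IsCyclic (P : Finset G.E) : Prop := G.boundary (G.indicator P) = 0

/-- Adjacency through an edge belonging to `P`. -/
def PAdj (P : Finset G.E) (u v : G.V) : Prop :=
  ∃ e ∈ P, u ∈ G.ends e ∧ v ∈ G.ends e

/-- The vertex set of the contraction `G/P`: connected components of `(V, P)`. -/
def CompV (P : Finset G.E) : Type := Quot (G.PAdj P)

instance (P : Finset G.E) : Finite (G.CompV P) := Quot.finite _
instance (P : Finset G.E) : Fintype (G.CompV P) := Fintype.ofFinite _
instance (P : Finset G.E) : Nonempty (G.CompV P) := G.neV.map (Quot.mk _)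

/-- The set of vertices of `G` lying in a given component. -/
def fiberV (P : Finset G.E) (x : G.CompV P) : Finset G.V :=
  Finset.univ.filter fun v => Quot.mk (G.PAdj P) v = x

/-- The set of edges of `P` lying in a given component. -/
def fiberE (P : Finset G.E) (x : G.CompV P) : Finset G.E :=
  P.filter fun e => ∀ v ∈ G.ends e, Quot.mk (G.PAdj P) v = x

/-- The weight of a vertex `x` of `G/P`: the genus of its preimage, i.e. the
sum of the weights of the vertices in the component plus its first Betti
number `#edges - #vertices + 1`. -/
def quotWeight (P : Finset G.E) (x : G.CompV P) : ℕ :=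
  (∑ v ∈ G.fiberV P x, G.w v) + ((G.fiberE P x).card + 1 - (G.fiberV P x).card)

/-- Connectedness of the graph. -/
def Connected : Prop := ∀ u v : G.V, Relation.EqvGen (G.PAdj Finset.univ) u v

/-- The number of connected components `c(G)`. -/
def numComp : ℕ := Nat.card (G.CompV Finset.univ)

/-- The first Betti number `b₁(G) = |E| - |V| + c(G)`. -/
def b1 : ℕ := Fintype.card G.E + G.numComp - Fintype.card G.V

/-- The genus `g(G) = Σ_v w(v) + b₁(G)`. -/
def genus : ℕ := (∑ v, G.w v) + G.b1

/-- The number of legs. -/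
def numLegs : ℕ := Fintype.card G.Lg

/-- Stability: connected and `2w(v) - 2 + deg(v) + ℓ(v) > 0` at every vertex. -/
def Stable : Prop :=
  G.Connected ∧ ∀ v : G.V, 2 < 2 * G.w v + G.deg v + G.legsAt v

/-- `G` is Eulerian (cyclic) if every vertex has even degree, i.e. the set of
all edges lies in the cycle space. -/
def Eulerian : Prop := G.IsCyclic Finset.univ

/-- A basic graph: a stable cyclic (Eulerian) graph of genus `≥ 2` with at
least one edge, all weights `≤ 1`, and `w(v) + deg(v) + ℓ(v) ≤ 4` at every
vertex with equality only if there is a loop at `v`. -/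
def IsBasic : Prop :=
  G.Stable ∧ 2 ≤ G.genus ∧ Nonempty G.E ∧ G.Eulerian ∧
  (∀ v, G.w v ≤ 1) ∧
  (∀ v, G.w v + G.deg v + G.legsAt v ≤ 4) ∧
  (∀ v, G.w v + G.deg v + G.legsAt v = 4 → 1 ≤ G.loops v)

/-- `c⁺`: the number of vertices of `G/P` of positive weight, i.e. the number
of connected components of `P̄` of positive genus. -/
def cPlus (P : Finset G.E) : ℕ :=
  (Finset.univ.filter fun x : G.CompV P => 0 < G.quotWeight P x).card

/-- The contracted graph `G/P`. -/
def contract (P : Finset G.E) : WGraph where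
  V := G.CompV P
  E := {e : G.E // e ∉ P}
  Lg := G.Lg
  fV := inferInstance
  fE := inferInstance
  fL := G.fL
  dV := Classical.decEq _
  dE := inferInstance
  dL := G.dL
  neV := inferInstance
  ends := fun e => (G.ends e.1).map (Quot.mk (G.PAdj P))
  legEnd := fun l => Quot.mk (G.PAdj P) (G.legEnd l)
  w := G.quotWeight P

/-- An ordered pair of endpoints of an edge. -/
def endPair (e : G.E) : G.V × G.V := Classical.choose (Quot.exists_rep (G.ends e))

end WGraph

/-- A spin structure on a graph `G`: a cyclic subset `P` of edges and a sign
function on the vertices of `G/P` vanishing at all vertices of weight `0`. -/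
structure SpinStructure (G : WGraph) where
  P : Finset G.E
  cyclic : G.IsCyclic P
  s : G.CompV P → ZMod 2
  vanish : ∀ x, G.quotWeight P x = 0 → s x = 0

/-- The parity of a spin structure: the parity of `Σ_{v ∈ V(G/P)} s(v)`. -/
def SpinStructure.parity {G : WGraph} (σ : SpinStructure G) : ZMod 2 := ∑ x, σ.s x

/-- A contraction of graphs `γ : G → G' = G/F`: the edges of `G'` are
identified with `E(G) ∖ F`, the legs of `G'` with those of `G`; the vertex
map is surjective, its fibers are exactly the connected components of
`(V(G), F)`, endpoints and legs are compatible, and the weight of a vertex of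
`G'` is the genus of its preimage. -/
structure Contraction (G G' : WGraph) where
  F : Finset G.E
  vMap : G.V → G'.V
  eEquiv : G'.E ≃ {e : G.E // e ∉ F}
  lEquiv : G'.Lg ≃ G.Lg
  vSurj : Function.Surjective vMap
  ends_compat : ∀ e' : G'.E, G'.ends e' = (G.ends (eEquiv e').1).map vMap
  leg_compat : ∀ l' : G'.Lg, G'.legEnd l' = vMap (G.legEnd (lEquiv l'))
  collapse : ∀ e ∈ F, ∀ u ∈ G.ends e, ∀ v ∈ G.ends e, vMap u = vMap v
  fiber_conn : ∀ u v : G.V, vMap u = vMap v → Relation.EqvGen (G.PAdj F) u v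
  w_compat : ∀ v' : G'.V,
    G'.w v' = (∑ v ∈ Finset.univ.filter (fun v => vMap v = v'), G.w v)
      + (((F.filter fun e => ∀ u ∈ G.ends e, vMap u = v').card + 1)
          - (Finset.univ.filter fun v => vMap v = v').card)

namespace Contraction

variable {G G' : WGraph} (γ : Contraction G G')

/-- The induced map `γ^E_* : E_G → E_{G'}` (γ^E_*(e) = e if e ∉ F, 0 else). -/
def eStar : (G.E → ZMod 2) →ₗ[ZMod 2] (G'.E → ZMod 2) where
  toFun x := fun e' => x (γ.eEquiv e').1
  map_add' _ _ := rfl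
  map_smul' _ _ := rfl

/-- The induced map `γ^V_* : V_G → V_{G'}`. -/
def vStar : (G.V → ZMod 2) →ₗ[ZMod 2] (G'.V → ZMod 2) where
  toFun x := fun v' => ∑ v ∈ Finset.univ.filter (fun v => γ.vMap v = v'), x v
  map_add' x y := by
    funext v'
    simp [Finset.sum_add_distrib]
  map_smul' c x := by
    funext v'
    simp [Finset.mul_sum]

/-- The pushforward `γ_* P = P ∖ F` of a set of edges, as a subset of `E(G')`. -/
def pushE (P : Finset G.E) : Finset G'.E :=
  Finset.univ.filter fun e' => (γ.eEquiv e' : {e : G.E // e ∉ γ.F}).1 ∈ P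

/-- The graph of the induced map `γ̄ : V(G/P) → V(G'/P')` on components. -/
def compMapsTo (P : Finset G.E) (P' : Finset G'.E)
    (x : G.CompV P) (x' : G'.CompV P') : Prop :=
  ∃ v : G.V, Quot.mk (G.PAdj P) v = x ∧ Quot.mk (G'.PAdj P') (γ.vMap v) = x'

/-- The pushforward sign function: `s'(v') = Σ_{v ∈ γ̄⁻¹(v')} s(v)`. -/
def pushS (P : Finset G.E) (s : G.CompV P → ZMod 2) :
    G'.CompV (γ.pushE P) → ZMod 2 :=
  fun x' => ∑ x ∈ Finset.univ.filter
    (fun x => γ.compMapsTo P (γ.pushE P) x x'), s x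

/-- `γ_* σ = σ'` for spin structures. -/
def SpinMapsTo (σ : SpinStructure G) (σ' : SpinStructure G') : Prop :=
  σ'.P = γ.pushE σ.P ∧ HEq σ'.s (γ.pushS σ.P σ.s)

end Contraction

/-- An automorphism of a graph: weight-preserving bijection on vertices,
bijection on edges compatible with endpoints, fixing every leg. -/
structure GraphAut (G : WGraph) where
  vE : G.V ≃ G.V
  eE : G.E ≃ G.E
  ends_compat : ∀ e, G.ends (eE e) = (G.ends e).map vE
  w_compat : ∀ v, G.w (vE v) = G.w v
  leg_fix : ∀ l, G.legEnd l = vE (G.legEnd l)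

namespace GraphAut

variable {G : WGraph}

/-- Composition of automorphisms (`α.comp β` acts by `β` first, then `α`). -/
def comp (α β : GraphAut G) : GraphAut G where
  vE := β.vE.trans α.vE
  eE := β.eE.trans α.eE
  ends_compat e := by
    simp only [Equiv.trans_apply, Equiv.coe_trans]
    rw [α.ends_compat, β.ends_compat, Sym2.map_map]
  w_compat v := by
    simp only [Equiv.trans_apply]
    rw [α.w_compat, β.w_compat]
  leg_fix l := by
    simp only [Equiv.trans_apply]
    rw [← β.leg_fix, ← α.leg_fix]

/-- `α_* σ = σ'` for an automorphism `α` and spin structures `σ, σ'`. -/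
def SpinMapsTo (α : GraphAut G) (σ σ' : SpinStructure G) : Prop :=
  σ'.P = σ.P.image α.eE ∧
  ∀ v : G.V, σ'.s (Quot.mk (G.PAdj σ'.P) (α.vE v)) = σ.s (Quot.mk (G.PAdj σ.P) v)

/-- `α` preserves the spin structure `σ`, i.e. `α_*(P,s) = (P,s)`. -/
def PreservesSpin (α : GraphAut G) (σ : SpinStructure G) : Prop :=
  α.SpinMapsTo σ σ

end GraphAut

/-- The graph `P̄ = G - R°` where `R = E ∖ P`: same vertices, edges `P`, and
the legs of `G` together with a pair of new legs for each edge of `R`, placed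
at its two endpoints. -/
def WGraph.legify (G : WGraph) (P : Finset G.E) : WGraph where
  V := G.V
  E := {e : G.E // e ∈ P}
  Lg := G.Lg ⊕ ({e : G.E // e ∉ P} × Bool)
  fV := G.fV
  fE := inferInstance
  fL := inferInstance
  dV := G.dV
  dE := inferInstance
  dL := inferInstance
  neV := G.neV
  ends := fun e => G.ends e.1
  legEnd := fun l =>
    match l with
    | Sum.inl l => G.legEnd l
    | Sum.inr (e, b) => if b then (G.endPair e.1).1 else (G.endPair e.1).2
  w := G.w

/-- `G` is a stable graph of genus `g` with `n` legs. -/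
def StG (g n : ℕ) (G : WGraph) : Prop := G.Stable ∧ G.genus = g ∧ G.numLegs = n

/-- Objects of the poset `C_{g,n}` before taking isomorphism classes. -/
def CycObj : Type 1 := Σ G : WGraph, Finset G.E

/-- Objects of the poset `SP_{g,n}` before taking isomorphism classes. -/
def SpinObj : Type 1 := Σ G : WGraph, SpinStructure G

/-- Order on graphs: `G ≥ G'` iff there is a contraction `G → G'`. -/
def GraphGe (G G' : WGraph) : Prop := Nonempty (Contraction G G')

/-- Order on `C_{g,n}`: `(G,P) ≥ (G',P')` iff some contraction pushes `P` to `P'`. -/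
def CycGe (a b : CycObj) : Prop := ∃ γ : Contraction a.1 b.1, γ.pushE a.2 = b.2

/-- Order on `SP_{g,n}`: `(G,P,s) ≥ (G',P',s')` iff some contraction pushes
`(P,s)` to `(P',s')`. -/
def SpinGe (a b : SpinObj) : Prop := ∃ γ : Contraction a.1 b.1, γ.SpinMapsTo a.2 b.2

/-- `q : X → Y` is a quotient of posets (for the `≥`-relations `geA`, `geB`):
it is surjective, order-preserving, and any relation downstairs lifts. -/
def IsPosetQuotient {α : Sort*} {β : Sort*}
    (geA : α → α → Prop) (geB : β → β → Prop) (q : α → β) : Prop :=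
  Function.Surjective q ∧
  (∀ a a', geA a a' → geB (q a) (q a')) ∧
  (∀ b b', geB b b' → ∃ a a', q a = b ∧ q a' = b' ∧ geA a a')

/-- Strict order `x > y` associated to a `≥`-relation. -/
def StrictGt {α : Sort*} (ge : α → α → Prop) (x y : α) : Prop := ge x y ∧ ¬ ge y x

/-- `x` covers `y`. -/
def Covers {α : Sort*} (ge : α → α → Prop) (x y : α) : Prop :=
  StrictGt ge x y ∧ ¬ ∃ z, StrictGt ge x z ∧ StrictGt ge z y

/-- `ρ` is a rank function for the `≥`-relation `ge`. -/
def IsRankFn {α : Sort*} (ge : α → α → Prop) (ρ : α → ℕ) : Prop :=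
  (∀ x y, StrictGt ge x y → ρ y < ρ x) ∧
  (∀ x y, Covers ge x y → ρ x = ρ y + 1)


/-! Pushing a spin structure forward along a contraction adds up the signs over the fibres of the
induced map on the components of `P`, so contractions preserve parity and spin graphs of different
parity are never comparable. Conversely, every stable graph of genus `g` with `n` legs contracts
onto the graph with one vertex of weight `g`, no edges and `n` legs, and any spin structure pushes
forward to the one with sign its parity; hence two spin graphs of equal parity are joined through
this common lower bound, and for `g > 0` both parities occur there. For `g = 0` every spin
structure is even: each component of `P` has genus at most `g(G) = 0`, so all signs vanish. -/

open Finset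

namespace WGraph

variable {G : WGraph}

def toSimpleGraph (G : WGraph) (P : Finset G.E) : SimpleGraph G.V :=
  SimpleGraph.fromRel (G.PAdj P)

lemma pAdj_symm {P : Finset G.E} {u v : G.V} (h : G.PAdj P u v) : G.PAdj P v u :=
  let ⟨e, he, hu, hv⟩ := h; ⟨e, he, hv, hu⟩

lemma toSimpleGraph_reachable_iff {P : Finset G.E} {u v : G.V} :
    (G.toSimpleGraph P).Reachable u v ↔ (Quot.mk _ u : G.CompV P) = Quot.mk _ v := by
  constructor
  · rw [SimpleGraph.reachable_iff_reflTransGen]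
    intro h
    induction h with
    | refl => rfl
    | tail _ hadj ih =>
      obtain ⟨-, hadj | hadj⟩ := (SimpleGraph.fromRel_adj _ _ _).mp hadj
      · exact ih.trans (Quot.sound hadj)
      · exact ih.trans (Quot.sound hadj).symm
  · intro h
    replace h := Quot.eqvGen_exact h
    induction h with
    | rel a b hab =>
      by_cases hne : a = b
      · exact hne ▸ SimpleGraph.Reachable.refl a
      · exact ((SimpleGraph.fromRel_adj _ _ _).mpr ⟨hne, Or.inl hab⟩).reachable
    | refl => rfl
    | symm _ _ _ ih => exact ih.symm
    | trans _ _ _ _ _ ih₁ ih₂ => exact ih₁.trans ih₂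

lemma card_fiberV_le (P : Finset G.E) (x : G.CompV P) :
    #(G.fiberV P x) ≤ #(G.fiberE P x) + 1 := by
  obtain ⟨r, rfl⟩ := Quot.exists_rep x
  -- The fibre is a connected component of the simple graph underlying `(V, P)`, and the edges
  -- of that component inject into the edges of `P` in the fibre.
  set C := (G.toSimpleGraph P).connectedComponentMk r
  have mem_supp : ∀ v, v ∈ C.supp ↔ v ∈ G.fiberV P (Quot.mk _ r) := fun v => by
    simp only [SimpleGraph.ConnectedComponent.mem_supp_iff, C, SimpleGraph.ConnectedComponent.eq,
      toSimpleGraph_reachable_iff, fiberV, mem_filter, mem_univ, true_and]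
  have edge_mem : ∀ z ∈ C.toSimpleGraph.edgeSet,
      ∃ e ∈ G.fiberE P (Quot.mk _ r), G.ends e = z.map Subtype.val := by
    intro z
    induction z using Sym2.ind with
    | h a b =>
    intro hab
    obtain ⟨hne, hadj⟩ := (SimpleGraph.fromRel_adj _ _ _).mp hab
    obtain ⟨e, he, ha, hb⟩ := hadj.elim id pAdj_symm
    refine ⟨e, mem_filter.mpr ⟨he, fun v hv => ?_⟩, ?_⟩
    · have ha' : Quot.mk (G.PAdj P) a.1 = Quot.mk _ r :=
        (mem_filter.mp ((mem_supp a).mp a.2)).2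
      exact (Quot.sound ⟨e, he, hv, ha⟩).trans ha'
    · exact Sym2.eq_of_ne_mem (hne : (a : G.V) ≠ b) ha hb
        (Sym2.mem_map.mpr ⟨a, Sym2.mem_mk_left _ _, rfl⟩)
        (Sym2.mem_map.mpr ⟨b, Sym2.mem_mk_right _ _, rfl⟩)
  choose f hf using edge_mem
  have hinj : Function.Injective fun z : C.toSimpleGraph.edgeSet =>
      (⟨f z z.2, (hf z z.2).1⟩ : G.fiberE P (Quot.mk _ r)) := by
    intro z z' h
    have := congrArg (fun e : G.fiberE P _ => G.ends e.1) h
    simp only [(hf z z.2).2, (hf z' z'.2).2] at this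
    exact Subtype.ext (Sym2.map.injective Subtype.coe_injective this)
  calc #(G.fiberV P (Quot.mk _ r)) = Nat.card C.supp := by
        rw [Nat.card_congr (Equiv.subtypeEquivRight mem_supp)]; simp
    _ ≤ Nat.card C.toSimpleGraph.edgeSet + 1 :=
        C.connected_toSimpleGraph.card_vert_le_card_edgeSet_add_one
    _ ≤ #(G.fiberE P (Quot.mk _ r)) + 1 := by
        gcongr
        exact (Nat.card_le_card_of_injective _ hinj).trans (by simp)

lemma Connected.subsingleton_compV_univ (hc : G.Connected) : Subsingleton (G.CompV univ) :=
  ⟨fun a b => Quot.induction_on₂ a b fun u v => Quot.eqvGen_sound (hc u v)⟩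

lemma Connected.numComp_eq_one (hc : G.Connected) : G.numComp = 1 := by
  have := hc.subsingleton_compV_univ
  rw [numComp, Nat.card_eq_one_iff_unique]
  exact ⟨this, inferInstance⟩

lemma Connected.genus_eq (hc : G.Connected) :
    G.genus = ∑ v, G.w v + (Fintype.card G.E + 1 - Fintype.card G.V) := by
  rw [genus, b1, hc.numComp_eq_one]

lemma Connected.card_V_le_card_E_add_one (hc : G.Connected) :
    Fintype.card G.V ≤ Fintype.card G.E + 1 := by
  have := hc.subsingleton_compV_univ
  obtain ⟨x⟩ : Nonempty (G.CompV univ) := inferInstance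
  have hfiber : G.fiberV univ x = univ :=
    eq_univ_of_forall fun v =>
      mem_filter.mpr ⟨mem_univ v, Subsingleton.elim (α := G.CompV univ) _ _⟩
  have := G.card_fiberV_le univ x
  rw [hfiber] at this
  exact this.trans (Nat.add_le_add_right (card_le_univ _) 1)

lemma Connected.contract (hc : G.Connected) (P : Finset G.E) : (G.contract P).Connected := by
  intro a b
  induction a, b using Quot.induction_on₂ with
  | h u v =>
  induction hc u v with
  | rel u v huv =>
    obtain ⟨e, -, hu, hv⟩ := huv
    by_cases he : e ∈ P
    · rw [Quot.sound (⟨e, he, hu, hv⟩ : G.PAdj P u v)]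
      exact Relation.EqvGen.refl _
    · exact Relation.EqvGen.rel _ _ ⟨⟨e, he⟩, mem_univ _,
        Sym2.mem_map.mpr ⟨u, hu, rfl⟩, Sym2.mem_map.mpr ⟨v, hv, rfl⟩⟩
  | refl u => exact Relation.EqvGen.refl _
  | symm u v _ ih => exact Relation.EqvGen.symm _ _ ih
  | trans u v w _ _ ih₁ ih₂ => exact Relation.EqvGen.trans _ _ _ ih₁ ih₂

lemma Connected.card_compV_le (hc : G.Connected) (P : Finset G.E) :
    Fintype.card (G.CompV P) ≤ Fintype.card G.E - #P + 1 := by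
  have h := (hc.contract P).card_V_le_card_E_add_one
  have hE : Fintype.card {e : G.E // e ∉ P} = Fintype.card G.E - #P := by
    simp [Fintype.card_subtype_compl]
  calc Fintype.card (G.CompV P) = Fintype.card (G.contract P).V := rfl
    _ ≤ Fintype.card (G.contract P).E + 1 := h
    _ = Fintype.card G.E - #P + 1 := by rw [← hE]; rfl

lemma endPair_fst_mem (e : G.E) : (G.endPair e).1 ∈ G.ends e := by
  have key : ∀ (z : Sym2 G.V) (p : G.V × G.V), Quot.mk _ p = z → p.1 ∈ z := by
    rintro z ⟨a, b⟩ rfl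
    exact Sym2.mem_mk_left a b
  exact key _ _ (Classical.choose_spec (Quot.exists_rep (G.ends e)))

lemma fiberE_eq_filter (P : Finset G.E) (x : G.CompV P) :
    G.fiberE P x = {e ∈ P | Quot.mk (G.PAdj P) (G.endPair e).1 = x} := by
  ext e
  simp only [fiberE, mem_filter, and_congr_right_iff]
  refine fun he => ⟨fun h => h _ (endPair_fst_mem e), fun h v hv => ?_⟩
  rw [← h]
  exact Quot.sound ⟨e, he, hv, endPair_fst_mem e⟩

lemma sum_card_fiberV (P : Finset G.E) : ∑ x, #(G.fiberV P x) = Fintype.card G.V :=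
  (card_eq_sum_card_fiberwise (t := (univ : Finset (G.CompV P))) fun _ _ => mem_univ _).symm

lemma sum_card_fiberE (P : Finset G.E) : ∑ x, #(G.fiberE P x) = #P := by
  simp only [fiberE_eq_filter]
  exact (card_eq_sum_card_fiberwise (t := (univ : Finset (G.CompV P))) fun _ _ => mem_univ _).symm

lemma Connected.sum_quotWeight_le_genus (hc : G.Connected) (P : Finset G.E) :
    ∑ x, G.quotWeight P x ≤ G.genus := by
  have hw : ∑ x, ∑ v ∈ G.fiberV P x, G.w v = ∑ v, G.w v :=
    sum_fiberwise (κ := G.CompV P) univ (Quot.mk _) G.w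
  have hterm : ∀ x, G.quotWeight P x + #(G.fiberV P x)
      = ∑ v ∈ G.fiberV P x, G.w v + #(G.fiberE P x) + 1 := fun x => by
    have := G.card_fiberV_le P x
    unfold quotWeight
    omega
  have hsum := sum_congr rfl fun x (_ : x ∈ univ) => hterm x
  simp only [sum_add_distrib, sum_card_fiberV, sum_card_fiberE, hw, sum_const, card_univ,
    smul_eq_mul, mul_one] at hsum
  have := hc.card_compV_le P
  have := card_le_univ P
  rw [hc.genus_eq]
  omega

end WGraph

lemma SpinStructure.parity_eq_zero_of_genus_eq_zero {G : WGraph} (σ : SpinStructure G)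
    (hc : G.Connected) (hg : G.genus = 0) : σ.parity = 0 := by
  have hw : ∀ x, G.quotWeight σ.P x = 0 := fun x =>
    Nat.eq_zero_of_le_zero <| (single_le_sum (fun _ _ => Nat.zero_le _) (mem_univ x)).trans
      (hg ▸ hc.sum_quotWeight_le_genus σ.P)
  exact sum_eq_zero fun x _ => σ.vanish x (hw x)

namespace Contraction

variable {G G' : WGraph} (γ : Contraction G G')

def compMap (P : Finset G.E) : G.CompV P → G'.CompV (γ.pushE P) :=
  Quot.lift (fun v => Quot.mk _ (γ.vMap v)) fun u v ⟨e, heP, hu, hv⟩ => by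
    by_cases hF : e ∈ γ.F
    · rw [γ.collapse e hF u hu v hv]
    · refine Quot.sound ⟨γ.eEquiv.symm ⟨e, hF⟩, ?_, ?_, ?_⟩
      · simpa [pushE] using heP
      · rw [γ.ends_compat, Equiv.apply_symm_apply]
        exact Sym2.mem_map.mpr ⟨u, hu, rfl⟩
      · rw [γ.ends_compat, Equiv.apply_symm_apply]
        exact Sym2.mem_map.mpr ⟨v, hv, rfl⟩

lemma compMapsTo_iff {P : Finset G.E} {x : G.CompV P} {x' : G'.CompV (γ.pushE P)} :
    γ.compMapsTo P (γ.pushE P) x x' ↔ γ.compMap P x = x' := by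
  induction x using Quot.ind with
  | mk v =>
    constructor
    · rintro ⟨w, hw, rfl⟩
      rw [← hw]
      rfl
    · exact fun h => ⟨v, rfl, h⟩

lemma parity_eq_of_spinMapsTo {σ : SpinStructure G} {σ' : SpinStructure G'}
    (hm : γ.SpinMapsTo σ σ') : σ'.parity = σ.parity := by
  obtain ⟨P', cyc', s', van'⟩ := σ'
  obtain ⟨rfl, hs⟩ := hm
  obtain rfl : s' = γ.pushS σ.P σ.s := eq_of_heq hs
  calc ∑ x', γ.pushS σ.P σ.s x'
      = ∑ x', ∑ x ∈ univ.filter (fun x => γ.compMap σ.P x = x'), σ.s x := by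
        simp only [pushS, compMapsTo_iff]
    _ = σ.parity := sum_fiberwise univ _ σ.s

end Contraction

abbrev WGraph.onePoint (g n : ℕ) : WGraph where
  V := Unit
  E := Empty
  Lg := Fin n
  fV := inferInstance
  fE := inferInstance
  fL := inferInstance
  dV := inferInstance
  dE := inferInstance
  dL := inferInstance
  neV := ⟨()⟩
  ends := Empty.elim
  legEnd := fun _ => ()
  w := fun _ => g

namespace WGraph.onePoint

variable {g n : ℕ}

instance (P : Finset (onePoint g n).E) : Subsingleton ((onePoint g n).CompV P) :=
  ⟨fun a b => Quot.induction_on₂ a b fun _ _ => rfl⟩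

lemma connected : (onePoint g n).Connected := fun _ _ => Relation.EqvGen.refl _

lemma quotWeight (P : Finset (onePoint g n).E) (x : (onePoint g n).CompV P) :
    (onePoint g n).quotWeight P x = g := by
  have hV : (onePoint g n).fiberV P x = univ :=
    eq_univ_of_forall fun _ =>
      mem_filter.mpr ⟨mem_univ _, Subsingleton.elim (α := (onePoint g n).CompV P) _ _⟩
  have hE : (onePoint g n).fiberE P x = ∅ := eq_empty_of_forall_notMem fun e => e.elim
  rw [WGraph.quotWeight, hV, hE]
  simp

lemma stG (h : 2 < 2 * g + n) : StG g n (onePoint g n) := by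
  refine ⟨⟨connected, fun v => ?_⟩, ?_, Fintype.card_fin n⟩
  · have hdeg : (onePoint g n).deg v = 0 := Fintype.sum_empty _
    have hlegs : (onePoint g n).legsAt v = n := by
      rw [legsAt, filter_true_of_mem fun _ _ => Subsingleton.elim _ _]
      exact Fintype.card_fin n
    change 2 < 2 * g + _ + _
    omega
  · rw [connected.genus_eq]
    simp

end WGraph.onePoint

def SpinStructure.onePoint (g n : ℕ) (p : ZMod 2) (hp : g = 0 → p = 0) :
    SpinStructure (WGraph.onePoint g n) where
  P := ∅
  cyclic := by funext; simp [WGraph.boundary]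
  s := fun _ => p
  vanish x hx := hp (WGraph.onePoint.quotWeight ∅ x ▸ hx)

lemma SpinStructure.onePoint_parity (g n : ℕ) (p : ZMod 2) (hp : g = 0 → p = 0) :
    (SpinStructure.onePoint g n p hp).parity = p := by
  rw [SpinStructure.parity]
  exact Fintype.sum_subsingleton (fun _ => p) (Quot.mk _ ())

def Contraction.toOnePoint {g n : ℕ} {G : WGraph} (hG : StG g n G) :
    Contraction G (WGraph.onePoint g n) where
  F := univ
  vMap := fun _ => ()
  eEquiv := @Equiv.equivOfIsEmpty _ _ _ ⟨fun e => e.2 (mem_univ _)⟩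
  lEquiv := Fintype.equivOfCardEq (by rw [Fintype.card_fin, ← hG.2.2]; rfl)
  vSurj := fun _ => ⟨Classical.arbitrary G.V, rfl⟩
  ends_compat := fun e => e.elim
  leg_compat := fun _ => rfl
  collapse := fun _ _ _ _ _ _ => rfl
  fiber_conn := fun u v _ => hG.1.1 u v
  w_compat := fun _ => by
    rw [filter_true_of_mem fun _ _ => rfl, filter_true_of_mem fun _ _ _ _ => rfl, card_univ,
      card_univ, ← hG.1.1.genus_eq, hG.2.1]

lemma Contraction.toOnePoint_spinMapsTo {g n : ℕ} {G : WGraph} (hG : StG g n G)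
    (σ : SpinStructure G) {p : ZMod 2} (hp : g = 0 → p = 0) (hpar : σ.parity = p) :
    (Contraction.toOnePoint hG).SpinMapsTo σ (SpinStructure.onePoint g n p hp) := by
  set γ := Contraction.toOnePoint hG
  have hP : γ.pushE σ.P = ∅ := eq_empty_of_isEmpty _
  have hs : ∀ x', γ.pushS σ.P σ.s x' = p := fun x' => by
    simp only [Contraction.pushS, γ.compMapsTo_iff, Subsingleton.elim _ x', filter_true, ← hpar]
    rfl
  exact ⟨hP.symm, Function.hfunext (congrArg _ hP.symm) fun _ a' _ => heq_of_eq (hs a').symm⟩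

lemma SpinObj.parity_eq_of_eqvGen {p : SpinObj → Prop} {a b : Subtype p}
    (h : Relation.EqvGen (fun x y : Subtype p => SpinGe x.1 y.1 ∨ SpinGe y.1 x.1) a b) :
    a.1.2.parity = b.1.2.parity := by
  induction h with
  | rel x y hxy =>
    rcases hxy with ⟨γ, hγ⟩ | ⟨γ, hγ⟩
    · exact (γ.parity_eq_of_spinMapsTo hγ).symm
    · exact γ.parity_eq_of_spinMapsTo hγ
  | refl => rfl
  | symm _ _ _ ih => exact ih.symm
  | trans _ _ _ _ _ ih₁ ih₂ => exact ih₁.trans ih₂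

lemma SpinObj.eqvGen_of_parity_eq {g n : ℕ} (h : 2 < 2 * g + n)
    {a b : {x : SpinObj // StG g n x.1}} (hab : a.1.2.parity = b.1.2.parity) :
    Relation.EqvGen (fun x y : {x : SpinObj // StG g n x.1} => SpinGe x.1 y.1 ∨ SpinGe y.1 x.1)
      a b := by
  have hp : g = 0 → a.1.2.parity = 0 := fun hg =>
    a.1.2.parity_eq_zero_of_genus_eq_zero a.2.1.1 (a.2.2.1.trans hg)
  let c : {x : SpinObj // StG g n x.1} :=
    ⟨⟨WGraph.onePoint g n, SpinStructure.onePoint g n a.1.2.parity hp⟩, WGraph.onePoint.stG h⟩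
  have hac : SpinGe a.1 c.1 := ⟨_, Contraction.toOnePoint_spinMapsTo a.2 a.1.2 hp rfl⟩
  have hbc : SpinGe b.1 c.1 := ⟨_, Contraction.toOnePoint_spinMapsTo b.2 b.1.2 hp hab.symm⟩
  exact .trans a c b (.rel a c (Or.inl hac)) (.rel c b (Or.inr hbc))

/-- Assume `2g − 2 + n > 0`.  If `g > 0`, the poset
`SP_{g,n}` of stable spin graphs of genus `g` with `n` legs has exactly two
connected components, `SP⁺_{g,n}` and `SP⁻_{g,n}`, the even and odd spin
graphs: both parities occur, and two stable spin graphs lie in the same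
connected component of the poset iff they have the same parity.  If `g = 0`,
then `SP_{g,n} = SP⁺_{g,n}` and the poset is connected. -/
theorem spin_poset_connected_components (g n : ℕ) (h : 2 < 2 * g + n) :
    (0 < g →
      (∃ a : {x : SpinObj // StG g n x.1}, a.1.2.parity = 1) ∧
      (∃ a : {x : SpinObj // StG g n x.1}, a.1.2.parity = 0) ∧
      (∀ a b : {x : SpinObj // StG g n x.1},
        Relation.EqvGen
          (fun x y : {x : SpinObj // StG g n x.1} =>
            SpinGe x.1 y.1 ∨ SpinGe y.1 x.1) a b
          ↔ a.1.2.parity = b.1.2.parity)) ∧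
    (g = 0 →
      (∀ a : {x : SpinObj // StG g n x.1}, a.1.2.parity = 0) ∧
      (∀ a b : {x : SpinObj // StG g n x.1},
        Relation.EqvGen
          (fun x y : {x : SpinObj // StG g n x.1} =>
            SpinGe x.1 y.1 ∨ SpinGe y.1 x.1) a b)) := by
  have onePoint_obj : ∀ p (hp : g = 0 → p = 0), ∃ a : {x : SpinObj // StG g n x.1},
      a.1.2.parity = p := fun p hp =>
    ⟨⟨⟨_, SpinStructure.onePoint g n p hp⟩, WGraph.onePoint.stG h⟩,
      SpinStructure.onePoint_parity g n p hp⟩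
  have parity_zero : g = 0 → ∀ a : {x : SpinObj // StG g n x.1}, a.1.2.parity = 0 :=
    fun hg a => a.1.2.parity_eq_zero_of_genus_eq_zero a.2.1.1 (a.2.2.1.trans hg)
  refine ⟨fun hg => ⟨onePoint_obj 1 (absurd · hg.ne'), onePoint_obj 0 fun _ => rfl,
      fun a b => ⟨SpinObj.parity_eq_of_eqvGen, SpinObj.eqvGen_of_parity_eq h⟩⟩,
    fun hg => ⟨parity_zero hg, fun a b => SpinObj.eqvGen_of_parity_eq h ?_⟩⟩
  rw [parity_zero hg a, parity_zero hg b]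

end
end

section
/- Let g > 0 and let G be a stable graph of genus g with n legs. Then G admits an odd spin structure, i.e., SP⁻_G ≠ ∅. -/
/-!
Common combinatorial preliminaries: weighted graphs with legs, contractions,
spin structures, following Caporaso–Melo–Pacini, "Tropicalizing the moduli
space of spin curves".
-/

attribute [local instance] Classical.propDecidable

noncomputable section

/-!
An odd spin structure `(P, s)` exists as soon as some cyclic `P` leaves a vertex of positive
weight in `G/P`: put `s = 1` there and `0` elsewhere. If a vertex of `G` has positive weight,
take `P = ∅`. Otherwise `b₁(G) = g > 0`. Summing over connected components kills the image of
the boundary map, so rank–nullity gives `dim C_G ≥ b₁(G) > 0` and a nonempty cyclic `P`. In the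
component of `(V, P)` through an edge of `P` every vertex has even, nonzero `P`-degree, so that
component has at least as many edges as vertices, i.e. positive genus.
-/

section FiberSum

variable {R α β : Type*} [Semiring R] [Fintype α] [DecidableEq β]

def fiberSum (q : α → β) : (α → R) →ₗ[R] (β → R) where
  toFun y x := ∑ a ∈ Finset.univ.filter (q · = x), y a
  map_add' y z := by
    funext x
    simp [Finset.sum_add_distrib]
  map_smul' c y := by
    funext x
    simp [Finset.mul_sum]

lemma fiberSum_apply (q : α → β) (y : α → R) (x : β) :
    fiberSum q y x = ∑ a ∈ Finset.univ.filter (q · = x), y a := rfl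

lemma fiberSum_surjective {q : α → β} (hq : Function.Surjective q) :
    Function.Surjective (fiberSum (R := R) q) := by
  intro z
  refine ⟨fun a => if a = Function.surjInv hq (q a) then z (q a) else 0, funext fun x => ?_⟩
  rw [fiberSum_apply, Finset.sum_eq_single (Function.surjInv hq x)]
  · simp [Function.surjInv_eq hq]
  · rintro a ha hne
    simp only [Finset.mem_filter, Finset.mem_univ, true_and] at ha
    simp [ha, hne]
  · simp [Function.surjInv_eq hq]

end FiberSum

namespace WGraph

variable (G : WGraph)

instance (P : Finset G.E) : Std.Symm (G.PAdj P) :=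
  ⟨fun _ _ ⟨e, he, hu, hv⟩ => ⟨e, he, hv, hu⟩⟩

lemma eq_or_exists_mem_ends_of_eqvGen {P : Finset G.E} {a b : G.V}
    (h : Relation.EqvGen (G.PAdj P) a b) : b = a ∨ ∃ e ∈ P, b ∈ G.ends e := by
  rw [Relation.EqvGen.eqvGen_eq_reflTransGen] at h
  rcases h.cases_tail with rfl | ⟨c, -, e, he, -, hb⟩
  · exact .inl rfl
  · exact .inr ⟨e, he, hb⟩

lemma degMul_of_ends_eq {v : G.V} {e : G.E} {a b : G.V} (h : G.ends e = s(a, b)) :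
    G.degMul v e = (if a = v then 1 else 0) + (if b = v then 1 else 0) := by
  simp [degMul, h]

lemma sum_degMul (e : G.E) : ∑ v, G.degMul v e = 2 := by
  induction h : G.ends e using Sym2.ind with
  | h a b => simp [G.degMul_of_ends_eq h, Finset.sum_add_distrib]

lemma degMul_pos_iff {v : G.V} {e : G.E} : 0 < G.degMul v e ↔ v ∈ G.ends e := by
  induction h : G.ends e using Sym2.ind with
  | h a b =>
    rw [G.degMul_of_ends_eq h, Sym2.mem_iff]
    by_cases ha : a = v <;> by_cases hb : b = v <;> simp [ha, hb, Ne.symm]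

lemma indicator_empty : G.indicator ∅ = 0 := by
  funext e
  simp [indicator]

lemma isCyclic_empty : G.IsCyclic ∅ := by
  rw [IsCyclic, indicator_empty, map_zero]

lemma quotWeight_empty (v : G.V) : G.quotWeight ∅ (Quot.mk _ v) = G.w v := by
  have hV : G.fiberV ∅ (Quot.mk _ v) = {v} := by
    ext u
    simp only [fiberV, Finset.mem_filter, Finset.mem_univ, true_and, Finset.mem_singleton]
    refine ⟨fun h => ?_, fun h => h ▸ rfl⟩
    simpa using G.eq_or_exists_mem_ends_of_eqvGen (Quot.eqvGen_exact h.symm)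
  simp [quotWeight, hV, fiberE]

lemma exists_w_pos_or_b1_pos (h : 0 < G.genus) : (∃ v, 0 < G.w v) ∨ 0 < G.b1 := by
  rw [genus, Nat.add_pos_iff_pos_or_pos, Finset.sum_pos_iff] at h
  simpa using h

lemma exists_odd_spin_of_quotWeight_pos {P : Finset G.E} (hc : G.IsCyclic P) (x : G.CompV P)
    (hx : 0 < G.quotWeight P x) : ∃ σ : SpinStructure G, σ.parity = 1 :=
  ⟨⟨P, hc, Pi.single x 1, fun y hy => Pi.single_eq_of_ne (by rintro rfl; omega) _⟩,
    Finset.sum_pi_single' x 1 Finset.univ |>.trans (if_pos (Finset.mem_univ x))⟩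

lemma fiberSum_boundary_eq_zero (y : G.E → ZMod 2) :
    fiberSum (Quot.mk (G.PAdj Finset.univ)) (G.boundary y) = 0 := by
  funext x
  simp only [fiberSum_apply, boundary, LinearMap.coe_mk, AddHom.coe_mk, Pi.zero_apply]
  rw [Finset.sum_comm]
  refine Finset.sum_eq_zero fun e _ => ?_
  rw [← Finset.mul_sum]
  induction h : G.ends e using Sym2.ind with
  | h a b =>
    have hab : Quot.mk (G.PAdj Finset.univ) a = Quot.mk _ b :=
      Quot.sound ⟨e, Finset.mem_univ e, by simp [h], by simp [h]⟩
    simp only [G.degMul_of_ends_eq h, Nat.cast_add, Nat.cast_ite, Nat.cast_one, Nat.cast_zero,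
      Finset.sum_add_distrib, Finset.sum_ite_eq, Finset.mem_filter, Finset.mem_univ, true_and, hab]
    split_ifs <;> simp [CharTwo.add_self_eq_zero]

lemma b1_le_finrank_ker_boundary :
    G.b1 ≤ Module.finrank (ZMod 2) (LinearMap.ker G.boundary) := by
  set S : (G.V → ZMod 2) →ₗ[ZMod 2] (G.CompV Finset.univ → ZMod 2) :=
    fiberSum (Quot.mk (G.PAdj Finset.univ))
  have hS : LinearMap.range S = ⊤ :=
    LinearMap.range_eq_top.mpr (fiberSum_surjective (Quot.exists_rep ·))
  have hrange : LinearMap.range G.boundary ≤ LinearMap.ker S := by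
    rintro _ ⟨y, rfl⟩
    exact G.fiberSum_boundary_eq_zero y
  have hE := LinearMap.finrank_range_add_finrank_ker G.boundary
  have hV := LinearMap.finrank_range_add_finrank_ker S
  have hmono := Submodule.finrank_mono hrange
  rw [hS, finrank_top] at hV
  have hQ : Module.finrank (ZMod 2) (G.CompV Finset.univ → ZMod 2) =
      Fintype.card (G.CompV Finset.univ) := Module.finrank_fintype_fun_eq_card _
  rw [hQ, Module.finrank_fintype_fun_eq_card] at hV
  rw [Module.finrank_fintype_fun_eq_card] at hE
  have hc : G.numComp = Fintype.card (G.CompV Finset.univ) := Nat.card_eq_fintype_card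
  rw [b1]
  omega

lemma indicator_filter_eq_one (x : G.E → ZMod 2) :
    G.indicator (Finset.univ.filter (x · = 1)) = x := by
  funext e
  have : x e = 0 ∨ x e = 1 := by generalize x e = a; decide +revert
  rcases this with h | h <;> simp [indicator, h]

lemma exists_isCyclic_nonempty (hb : 0 < G.b1) : ∃ P : Finset G.E, G.IsCyclic P ∧ P.Nonempty := by
  have hker : LinearMap.ker G.boundary ≠ ⊥ :=
    Submodule.one_le_finrank_iff.mp (hb.trans_le G.b1_le_finrank_ker_boundary)
  obtain ⟨x, hx, hx0⟩ := Submodule.ne_bot_iff _ |>.mp hker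
  refine ⟨_, by rwa [IsCyclic, G.indicator_filter_eq_one], Finset.nonempty_iff_ne_empty.mpr ?_⟩
  intro hP
  rw [← G.indicator_filter_eq_one x, hP, indicator_empty] at hx0
  exact hx0 rfl

lemma even_sum_degMul_of_isCyclic {P : Finset G.E} (hc : G.IsCyclic P) (v : G.V) :
    Even (∑ e ∈ P, G.degMul v e) := by
  rw [← ZMod.natCast_eq_zero_iff_even]
  have := congrFun hc v
  simpa [boundary, indicator, Finset.sum_ite_mem] using this

lemma mem_fiberE_of_mem_fiberV {P : Finset G.E} {x : G.CompV P} {v : G.V} {e : G.E}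
    (hv : v ∈ G.fiberV P x) (he : e ∈ P) (hve : v ∈ G.ends e) : e ∈ G.fiberE P x := by
  simp only [fiberV, fiberE, Finset.mem_filter, Finset.mem_univ, true_and] at hv ⊢
  exact ⟨he, fun u hu => (Quot.sound ⟨e, he, hu, hve⟩).trans hv⟩

lemma two_le_sum_fiberE_degMul {P : Finset G.E} (hc : G.IsCyclic P) {x : G.CompV P}
    {v : G.V} (hv : v ∈ G.fiberV P x) (hvP : ∃ e ∈ P, v ∈ G.ends e) :
    2 ≤ ∑ e ∈ G.fiberE P x, G.degMul v e := by
  have hsum : ∑ e ∈ G.fiberE P x, G.degMul v e = ∑ e ∈ P, G.degMul v e := by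
    refine Finset.sum_subset (Finset.filter_subset _ _) fun e he hex => ?_
    by_contra h
    exact hex (G.mem_fiberE_of_mem_fiberV hv he (G.degMul_pos_iff.mp (Nat.pos_of_ne_zero h)))
  obtain ⟨e, he, hve⟩ := hvP
  have hpos : 0 < ∑ e ∈ P, G.degMul v e :=
    (G.degMul_pos_iff.mpr hve).trans_le (Finset.single_le_sum (fun _ _ => Nat.zero_le _) he)
  obtain ⟨k, hk⟩ := G.even_sum_degMul_of_isCyclic hc v
  omega

lemma card_fiberV_le_card_fiberE {P : Finset G.E} (hc : G.IsCyclic P) (x : G.CompV P)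
    (hx : ∀ v ∈ G.fiberV P x, ∃ e ∈ P, v ∈ G.ends e) :
    (G.fiberV P x).card ≤ (G.fiberE P x).card := by
  have : 2 * (G.fiberV P x).card ≤ 2 * (G.fiberE P x).card :=
    calc 2 * (G.fiberV P x).card
        = ∑ _v ∈ G.fiberV P x, 2 := by rw [Finset.sum_const, smul_eq_mul, mul_comm]
      _ ≤ ∑ v ∈ G.fiberV P x, ∑ e ∈ G.fiberE P x, G.degMul v e :=
          Finset.sum_le_sum fun v hv => G.two_le_sum_fiberE_degMul hc hv (hx v hv)
      _ = ∑ e ∈ G.fiberE P x, ∑ v ∈ G.fiberV P x, G.degMul v e := Finset.sum_comm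
      _ ≤ ∑ e ∈ G.fiberE P x, ∑ v, G.degMul v e :=
          Finset.sum_le_sum fun e _ => Finset.sum_le_sum_of_subset (Finset.subset_univ _)
      _ = 2 * (G.fiberE P x).card := by
          simp only [sum_degMul, Finset.sum_const, smul_eq_mul, mul_comm]
  omega

lemma quotWeight_pos_of_isCyclic {P : Finset G.E} (hc : G.IsCyclic P) {e : G.E} (he : e ∈ P)
    {a : G.V} (ha : a ∈ G.ends e) : 0 < G.quotWeight P (Quot.mk _ a) := by
  have hx : ∀ v ∈ G.fiberV P (Quot.mk _ a), ∃ e ∈ P, v ∈ G.ends e := by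
    intro v hv
    simp only [fiberV, Finset.mem_filter, Finset.mem_univ, true_and] at hv
    rcases G.eq_or_exists_mem_ends_of_eqvGen (Quot.eqvGen_exact hv.symm) with rfl | hvP
    · exact ⟨e, he, ha⟩
    · exact hvP
  have := G.card_fiberV_le_card_fiberE hc _ hx
  unfold quotWeight
  omega

end WGraph

theorem odd_spin_structure_exists_general (g : ℕ) (hg : 0 < g) (G : WGraph)
    (hgen : G.genus = g) :
    ∃ σ : SpinStructure G, σ.parity = 1 := by
  rcases G.exists_w_pos_or_b1_pos (hgen ▸ hg) with ⟨v, hv⟩ | hb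
  · exact G.exists_odd_spin_of_quotWeight_pos G.isCyclic_empty _ (G.quotWeight_empty v ▸ hv)
  · obtain ⟨P, hP, e, he⟩ := G.exists_isCyclic_nonempty hb
    exact G.exists_odd_spin_of_quotWeight_pos hP _
      (G.quotWeight_pos_of_isCyclic hP he (Sym2.out_fst_mem (G.ends e)))

/-- Let `g > 0` and let `G` be a stable graph of genus `g`
with `n` legs.  Then `G` admits an odd spin structure: `SP⁻_G ≠ ∅`. -/
theorem odd_spin_structure_exists (g n : ℕ) (hg : 0 < g) (G : WGraph)
    (hst : G.Stable) (hgen : G.genus = g) (hn : G.numLegs = n) :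
    ∃ σ : SpinStructure G, σ.parity = 1 :=
  odd_spin_structure_exists_general g hg G hgen

end
end
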